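/- Let (M₀, E₀, m, a, b) and (M₀†, E₀†, m†, a†, b†) be two tuples of strictly positive real numbers. Suppose that for every λ ≥ 0 there are given differentiable functions M_λ, E_λ, M_λ†, E_λ† : [0,∞) → ℝ with E_λ(t) > 0 and E_λ†(t) > 0 for all t ≥ 0, satisfying M_λ(0) = M₀, E_λ(0) = E₀, M_λ†(0) = M₀†, E_λ†(0) = E₀†, and for all t ≥ 0: M_λ′(t) = E_λ(t)^m / (1 + E_λ(t)^m) − a·M_λ(t), E_λ′(t) = M_λ(t) − b·E_λ(t) − λ·E_λ(t), and (M_λ†)′(t) = E_λ†(t)^{m†} / (1 + E_λ†(t)^{m†}) − a†·M_λ†(t), (E_λ†)′(t) = M_λ†(t) − b†·E_λ†(t) − λ·E_λ†(t). If M_λ(t) = M_λ†(t) for all λ ≥ 0 and all t ≥ 0, then M₀ = M₀†, E₀ = E₀†, m = m†, a = a†, and b = b†. -/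

import Mathlib

/-!
At `t = 0` the state `(M₀, E₀)` does not depend on the input level `λ`, while `Ė/E = M/E - b - λ`
is affine in `λ`. Hence `M⁽ᵏ⁺¹⁾(0)` is a polynomial of degree `k` in `λ` with leading coefficient
`(-1)ᵏ hₖ(E₀)`, where `hₖ = (x d/dx)ᵏ h` and `h(x) = xᵐ/(1+xᵐ)`. Equal outputs for all `λ ≥ 0`
therefore give `hₖ(E₀) = h†ₖ(E₀†)` for `k = 1, 2, 3`. With `s = E₀ᵐ` these are
`m s/(1+s)²`, `m² s(1-s)/(1+s)³` and `m³ s(1-4s+s²)/(1+s)⁴`, so `m² h₁² = 3 h₂² - 2 h₁ h₃`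
recovers `m`, and `h₂/h₁ = m (1-s)/(1+s)` then recovers `s` and `E₀`. Finally `a` is read off
`Ṁ(0)` and `b` off `M̈(0)`.
-/

open Set

noncomputable def hill (m x : ℝ) : ℝ := x ^ m / (1 + x ^ m)

/- `hillₖ = (x d/dx)ᵏ hill`. -/

noncomputable def hill₁ (m x : ℝ) : ℝ := m * x ^ m / (1 + x ^ m) ^ 2

noncomputable def hill₂ (m x : ℝ) : ℝ := m ^ 2 * x ^ m * (1 - x ^ m) / (1 + x ^ m) ^ 3

noncomputable def hill₃ (m x : ℝ) : ℝ :=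
  m ^ 3 * x ^ m * (1 - 4 * x ^ m + (x ^ m) ^ 2) / (1 + x ^ m) ^ 4

section Hill

variable {m x : ℝ}

theorem hasDerivAt_rpow_const_of_pos (hx : 0 < x) :
    HasDerivAt (fun y : ℝ => y ^ m) (m * x ^ m / x) x := by
  simpa [Real.rpow_sub_one hx.ne', mul_div_assoc] using
    Real.hasDerivAt_rpow_const (p := m) (Or.inl hx.ne')

theorem one_add_rpow_pos (hx : 0 < x) : 0 < 1 + x ^ m := by
  have := Real.rpow_pos_of_pos hx m
  linarith

theorem hasDerivAt_hill (hx : 0 < x) : HasDerivAt (hill m) (hill₁ m x / x) x := by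
  have hs := hasDerivAt_rpow_const_of_pos (m := m) hx
  have hd := (one_add_rpow_pos (m := m) hx).ne'
  refine (hs.fun_div (hs.const_add 1) hd).congr_deriv ?_
  unfold hill₁
  field_simp
  ring

theorem hasDerivAt_hill₁ (hx : 0 < x) : HasDerivAt (hill₁ m) (hill₂ m x / x) x := by
  have hs := hasDerivAt_rpow_const_of_pos (m := m) hx
  have hd := (one_add_rpow_pos (m := m) hx).ne'
  refine ((hs.const_mul m).fun_div ((hs.const_add 1).fun_pow 2)
    (pow_ne_zero 2 hd)).congr_deriv ?_
  unfold hill₂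
  field_simp
  ring

theorem hasDerivAt_hill₂ (hx : 0 < x) : HasDerivAt (hill₂ m) (hill₃ m x / x) x := by
  have hs := hasDerivAt_rpow_const_of_pos (m := m) hx
  have hd := (one_add_rpow_pos (m := m) hx).ne'
  refine (((hs.const_mul (m ^ 2)).fun_mul (hs.const_sub 1)).fun_div
    ((hs.const_add 1).fun_pow 3) (pow_ne_zero 3 hd)).congr_deriv ?_
  unfold hill₃
  field_simp
  ring

theorem hill₁_pos (hm : 0 < m) (hx : 0 < x) : 0 < hill₁ m x := by
  have := Real.rpow_pos_of_pos hx m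
  unfold hill₁
  positivity

theorem hill₂_eq_mul_hill₁ (hx : 0 < x) :
    hill₂ m x = m * (1 - x ^ m) / (1 + x ^ m) * hill₁ m x := by
  have hd := (one_add_rpow_pos (m := m) hx).ne'
  unfold hill₁ hill₂
  field_simp

theorem sq_mul_hill₁_sq (hx : 0 < x) :
    m ^ 2 * hill₁ m x ^ 2 = 3 * hill₂ m x ^ 2 - 2 * hill₁ m x * hill₃ m x := by
  have hd := (one_add_rpow_pos (m := m) hx).ne'
  unfold hill₁ hill₂ hill₃
  field_simp
  ring

theorem eq_of_hill_derivs_eq {m' x' : ℝ} (hm : 0 < m) (hm' : 0 < m') (hx : 0 < x)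
    (hx' : 0 < x') (h₁ : hill₁ m x = hill₁ m' x') (h₂ : hill₂ m x = hill₂ m' x')
    (h₃ : hill₃ m x = hill₃ m' x') : m = m' ∧ x = x' := by
  have hpos := hill₁_pos hm hx
  have hmm : m = m' := by
    have hsq : m ^ 2 * hill₁ m x ^ 2 = m' ^ 2 * hill₁ m x ^ 2 := by
      rw [sq_mul_hill₁_sq hx, h₂, h₃, h₁, sq_mul_hill₁_sq hx']
    have := mul_right_cancel₀ (pow_ne_zero 2 hpos.ne') hsq
    nlinarith
  subst hmm
  have hd := one_add_rpow_pos (m := m) hx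
  have hd' := one_add_rpow_pos (m := m) hx'
  have hratio : m * (1 - x ^ m) / (1 + x ^ m) = m * (1 - x' ^ m) / (1 + x' ^ m) := by
    rw [hill₂_eq_mul_hill₁ hx, hill₂_eq_mul_hill₁ hx', h₁] at h₂
    exact mul_right_cancel₀ (hill₁_pos hm hx').ne' h₂
  rw [div_eq_div_iff hd.ne' hd'.ne'] at hratio
  refine ⟨rfl, Real.rpow_left_injOn hm.ne' hx.le hx'.le ?_⟩
  nlinarith

end Hill

/- The time derivatives of the operon system along a trajectory, written as functions of the
state `(x, e) = (M t, E t)` for the dilution rate `c = b + λ`: `outputₖ` is `M⁽ᵏ⁾` and `logRate`,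
`logRate₁`, `logRate₂` are `Ė/E` and its first two derivatives. -/

noncomputable def logRate (c x e : ℝ) : ℝ := x / e - c

noncomputable def output₁ (m a x e : ℝ) : ℝ := hill m e - a * x

noncomputable def logRate₁ (m a c x e : ℝ) : ℝ := output₁ m a x e / e - x / e * logRate c x e

noncomputable def output₂ (m a c x e : ℝ) : ℝ := hill₁ m e * logRate c x e - a * output₁ m a x e

noncomputable def logRate₂ (m a c x e : ℝ) : ℝ :=
  output₂ m a c x e / e - output₁ m a x e / e * logRate c x e
    - logRate₁ m a c x e * logRate c x e - x / e * logRate₁ m a c x e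

noncomputable def output₃ (m a c x e : ℝ) : ℝ :=
  hill₂ m e * logRate c x e ^ 2 + hill₁ m e * logRate₁ m a c x e - a * output₂ m a c x e

noncomputable def output₄ (m a c x e : ℝ) : ℝ :=
  hill₃ m e * logRate c x e ^ 3 + 3 * hill₂ m e * logRate c x e * logRate₁ m a c x e
    + hill₁ m e * logRate₂ m a c x e - a * output₃ m a c x e

structure IsOperonSolution (m a c : ℝ) (M E : ℝ → ℝ) (s : Set ℝ) : Prop where
  pos : ∀ t ∈ s, 0 < E t
  hasDerivWithinAt_M : ∀ t ∈ s, HasDerivWithinAt M (output₁ m a (M t) (E t)) s t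
  hasDerivWithinAt_E : ∀ t ∈ s, HasDerivWithinAt E (M t - c * E t) s t

theorem Set.EqOn.of_hasDerivWithinAt {f g f' g' : ℝ → ℝ} {s : Set ℝ} (hs : UniqueDiffOn ℝ s)
    (hf : ∀ t ∈ s, HasDerivWithinAt f (f' t) s t) (hg : ∀ t ∈ s, HasDerivWithinAt g (g' t) s t)
    (hfg : EqOn f g s) : EqOn f' g' s := fun t ht =>
  (hs t ht).eq_deriv _ (hf t ht) ((hg t ht).congr hfg (hfg ht))

namespace IsOperonSolution

section Derivatives

variable {m a c : ℝ} {M E : ℝ → ℝ} {s : Set ℝ} {t : ℝ}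

theorem hasDerivWithinAt_comp_E {φ ψ : ℝ → ℝ} (h : IsOperonSolution m a c M E s) (ht : t ∈ s)
    (hφ : HasDerivAt φ (ψ (E t) / E t) (E t)) :
    HasDerivWithinAt (fun t => φ (E t)) (ψ (E t) * logRate c (M t) (E t)) s t := by
  have hE := (h.pos t ht).ne'
  refine (hφ.comp_hasDerivWithinAt t (h.hasDerivWithinAt_E t ht)).congr_deriv ?_
  unfold logRate
  field_simp

theorem hasDerivWithinAt_logRate (h : IsOperonSolution m a c M E s) (ht : t ∈ s) :
    HasDerivWithinAt (fun t => logRate c (M t) (E t)) (logRate₁ m a c (M t) (E t)) s t := by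
  have hE := (h.pos t ht).ne'
  refine (((h.hasDerivWithinAt_M t ht).fun_div (h.hasDerivWithinAt_E t ht) hE).sub_const
    c).congr_deriv ?_
  unfold logRate₁ logRate
  field_simp

theorem hasDerivWithinAt_output₁ (h : IsOperonSolution m a c M E s) (ht : t ∈ s) :
    HasDerivWithinAt (fun t => output₁ m a (M t) (E t)) (output₂ m a c (M t) (E t)) s t :=
  (h.hasDerivWithinAt_comp_E ht (hasDerivAt_hill (h.pos t ht))).sub
    ((h.hasDerivWithinAt_M t ht).const_mul a)

theorem hasDerivWithinAt_logRate₁ (h : IsOperonSolution m a c M E s) (ht : t ∈ s) :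
    HasDerivWithinAt (fun t => logRate₁ m a c (M t) (E t)) (logRate₂ m a c (M t) (E t)) s t := by
  have hE := (h.pos t ht).ne'
  have hq := (h.hasDerivWithinAt_M t ht).fun_div (h.hasDerivWithinAt_E t ht) hE
  refine (((h.hasDerivWithinAt_output₁ ht).fun_div (h.hasDerivWithinAt_E t ht) hE).sub
    (hq.fun_mul (h.hasDerivWithinAt_logRate ht))).congr_deriv ?_
  unfold logRate₂ logRate₁ logRate
  field_simp
  ring

theorem hasDerivWithinAt_output₂ (h : IsOperonSolution m a c M E s) (ht : t ∈ s) :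
    HasDerivWithinAt (fun t => output₂ m a c (M t) (E t)) (output₃ m a c (M t) (E t)) s t := by
  refine (((h.hasDerivWithinAt_comp_E ht (hasDerivAt_hill₁ (h.pos t ht))).fun_mul
    (h.hasDerivWithinAt_logRate ht)).sub
    ((h.hasDerivWithinAt_output₁ ht).const_mul a)).congr_deriv ?_
  unfold output₃
  ring

theorem hasDerivWithinAt_output₃ (h : IsOperonSolution m a c M E s) (ht : t ∈ s) :
    HasDerivWithinAt (fun t => output₃ m a c (M t) (E t)) (output₄ m a c (M t) (E t)) s t := by
  refine ((((h.hasDerivWithinAt_comp_E ht (hasDerivAt_hill₂ (h.pos t ht))).fun_mul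
    ((h.hasDerivWithinAt_logRate ht).fun_pow 2)).add
    ((h.hasDerivWithinAt_comp_E ht (hasDerivAt_hill₁ (h.pos t ht))).fun_mul
    (h.hasDerivWithinAt_logRate₁ ht))).sub
    ((h.hasDerivWithinAt_output₂ ht).const_mul a)).congr_deriv ?_
  unfold output₄
  ring

end Derivatives

variable {m a c m' a' c' : ℝ} {M E M' E' : ℝ → ℝ} {s : Set ℝ}

theorem outputs_eqOn (hs : UniqueDiffOn ℝ s) (h : IsOperonSolution m a c M E s)
    (h' : IsOperonSolution m' a' c' M' E' s) (hM : EqOn M M' s) :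
    EqOn (fun t => output₁ m a (M t) (E t)) (fun t => output₁ m' a' (M' t) (E' t)) s ∧
    EqOn (fun t => output₂ m a c (M t) (E t)) (fun t => output₂ m' a' c' (M' t) (E' t)) s ∧
    EqOn (fun t => output₃ m a c (M t) (E t)) (fun t => output₃ m' a' c' (M' t) (E' t)) s ∧
    EqOn (fun t => output₄ m a c (M t) (E t)) (fun t => output₄ m' a' c' (M' t) (E' t)) s := by
  have h₁ := hM.of_hasDerivWithinAt hs h.hasDerivWithinAt_M h'.hasDerivWithinAt_M
  have h₂ := h₁.of_hasDerivWithinAt hs (fun _ => h.hasDerivWithinAt_output₁)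
    (fun _ => h'.hasDerivWithinAt_output₁)
  have h₃ := h₂.of_hasDerivWithinAt hs (fun _ => h.hasDerivWithinAt_output₂)
    (fun _ => h'.hasDerivWithinAt_output₂)
  exact ⟨h₁, h₂, h₃, h₃.of_hasDerivWithinAt hs (fun _ => h.hasDerivWithinAt_output₃)
    (fun _ => h'.hasDerivWithinAt_output₃)⟩

end IsOperonSolution

section Identification

variable {m a b m' a' b' x e e' : ℝ}

/- `outputₖ₊₁ m a (b + λ) x e` is a polynomial of degree `k` in `λ` with leading coefficient
`(-1)ᵏ hillₖ m e`; its `k`-th finite difference at `λ = 0` is `(-1)ᵏ k! hillₖ m e`. -/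

theorem hill₁_eq_of_output₂_eq
    (h : ∀ l : ℝ, 0 ≤ l → output₂ m a (b + l) x e = output₂ m' a' (b' + l) x e') :
    hill₁ m e = hill₁ m' e' := by
  have h₀ := h 0 le_rfl
  have h₁ := h 1 zero_le_one
  simp only [output₂, logRate] at h₀ h₁
  linear_combination h₀ - h₁

theorem hill₂_eq_of_output₃_eq
    (h : ∀ l : ℝ, 0 ≤ l → output₃ m a (b + l) x e = output₃ m' a' (b' + l) x e') :
    hill₂ m e = hill₂ m' e' := by
  have h₀ := h 0 le_rfl
  have h₁ := h 1 zero_le_one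
  have h₂ := h 2 zero_le_two
  simp only [output₃, output₂, logRate₁, logRate] at h₀ h₁ h₂
  linear_combination (h₀ - 2 * h₁ + h₂) / 2

theorem hill₃_eq_of_output₄_eq
    (h : ∀ l : ℝ, 0 ≤ l → output₄ m a (b + l) x e = output₄ m' a' (b' + l) x e') :
    hill₃ m e = hill₃ m' e' := by
  have h₀ := h 0 le_rfl
  have h₁ := h 1 zero_le_one
  have h₂ := h 2 zero_le_two
  have h₃ := h 3 zero_le_three
  simp only [output₄, output₃, output₂, logRate₂, logRate₁, logRate] at h₀ h₁ h₂ h₃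
  linear_combination (h₀ - 3 * h₁ + 3 * h₂ - h₃) / 6

theorem eq_of_output₁_eq (hx : x ≠ 0) (h : output₁ m a x e = output₁ m a' x e) : a = a' := by
  simp only [output₁, sub_right_inj] at h
  exact mul_right_cancel₀ hx h

theorem eq_of_output₂_eq (hm : 0 < m) (he : 0 < e)
    (h : output₂ m a b x e = output₂ m a b' x e) : b = b' := by
  simp only [output₂, logRate, sub_left_inj] at h
  have := mul_left_cancel₀ (hill₁_pos hm he).ne' h
  linarith

end Identification

theorem operon_parameters_identifiable_general
    (M₀ E₀ m a b M₀' E₀' m' a' b' : ℝ)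
    (hM₀ : 0 < M₀) (hm : 0 < m)
    (hm' : 0 < m')
    (M E M' E' : ℝ → ℝ → ℝ)
    (hEpos : ∀ lam : ℝ, 0 ≤ lam → ∀ t : ℝ, 0 ≤ t → 0 < E lam t)
    (hEpos' : ∀ lam : ℝ, 0 ≤ lam → ∀ t : ℝ, 0 ≤ t → 0 < E' lam t)
    (hMinit : ∀ lam : ℝ, 0 ≤ lam → M lam 0 = M₀)
    (hEinit : ∀ lam : ℝ, 0 ≤ lam → E lam 0 = E₀)
    (hMinit' : ∀ lam : ℝ, 0 ≤ lam → M' lam 0 = M₀')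
    (hEinit' : ∀ lam : ℝ, 0 ≤ lam → E' lam 0 = E₀')
    (hModE : ∀ lam : ℝ, 0 ≤ lam → ∀ t : ℝ, 0 ≤ t →
      HasDerivWithinAt (M lam)
        (E lam t ^ m / (1 + E lam t ^ m) - a * M lam t) (Set.Ici 0) t)
    (hEode : ∀ lam : ℝ, 0 ≤ lam → ∀ t : ℝ, 0 ≤ t →
      HasDerivWithinAt (E lam)
        (M lam t - b * E lam t - lam * E lam t) (Set.Ici 0) t)
    (hModE' : ∀ lam : ℝ, 0 ≤ lam → ∀ t : ℝ, 0 ≤ t →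
      HasDerivWithinAt (M' lam)
        (E' lam t ^ m' / (1 + E' lam t ^ m') - a' * M' lam t) (Set.Ici 0) t)
    (hEode' : ∀ lam : ℝ, 0 ≤ lam → ∀ t : ℝ, 0 ≤ t →
      HasDerivWithinAt (E' lam)
        (M' lam t - b' * E' lam t - lam * E' lam t) (Set.Ici 0) t)
    (hout : ∀ lam : ℝ, 0 ≤ lam → ∀ t : ℝ, 0 ≤ t → M lam t = M' lam t) :
    M₀ = M₀' ∧ E₀ = E₀' ∧ m = m' ∧ a = a' ∧ b = b' := by
  obtain rfl : M₀ = M₀' := hMinit 0 le_rfl ▸ hMinit' 0 le_rfl ▸ hout 0 le_rfl 0 le_rfl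
  have hE₀ : 0 < E₀ := hEinit 0 le_rfl ▸ hEpos 0 le_rfl 0 le_rfl
  have hE₀' : 0 < E₀' := hEinit' 0 le_rfl ▸ hEpos' 0 le_rfl 0 le_rfl
  have houtputs (l : ℝ) (hl : 0 ≤ l) :
      output₁ m a M₀ E₀ = output₁ m' a' M₀ E₀' ∧
      output₂ m a (b + l) M₀ E₀ = output₂ m' a' (b' + l) M₀ E₀' ∧
      output₃ m a (b + l) M₀ E₀ = output₃ m' a' (b' + l) M₀ E₀' ∧
      output₄ m a (b + l) M₀ E₀ = output₄ m' a' (b' + l) M₀ E₀' := by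
    have hsol : IsOperonSolution m a (b + l) (M l) (E l) (Ici 0) :=
      ⟨hEpos l hl, hModE l hl, fun t ht => (hEode l hl t ht).congr_deriv (by ring)⟩
    have hsol' : IsOperonSolution m' a' (b' + l) (M' l) (E' l) (Ici 0) :=
      ⟨hEpos' l hl, hModE' l hl, fun t ht => (hEode' l hl t ht).congr_deriv (by ring)⟩
    obtain ⟨h₁, h₂, h₃, h₄⟩ := hsol.outputs_eqOn (uniqueDiffOn_Ici 0) hsol' (hout l hl)
    simpa only [hMinit l hl, hEinit l hl, hMinit' l hl, hEinit' l hl] using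
      (⟨h₁ self_mem_Ici, h₂ self_mem_Ici, h₃ self_mem_Ici, h₄ self_mem_Ici⟩ : _ ∧ _ ∧ _ ∧ _)
  obtain ⟨rfl, rfl⟩ := eq_of_hill_derivs_eq hm hm' hE₀ hE₀'
    (hill₁_eq_of_output₂_eq fun l hl => (houtputs l hl).2.1)
    (hill₂_eq_of_output₃_eq fun l hl => (houtputs l hl).2.2.1)
    (hill₃_eq_of_output₄_eq fun l hl => (houtputs l hl).2.2.2)
  obtain rfl : a = a' := eq_of_output₁_eq hM₀.ne' (houtputs 0 le_rfl).1
  have hb : b = b' := eq_of_output₂_eq hm hE₀ (by simpa only [add_zero] using (houtputs 0 le_rfl).2.1)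
  exact ⟨rfl, rfl, rfl, rfl, hb⟩

/-- Identifiability of the operon model with external input: if for every constant input level
`λ ≥ 0` the solutions of `Ṁ = E^m/(1+E^m) − aM`, `Ė = M − bE − λE` for two positive parameter
tuples `(M₀, E₀, m, a, b)` and `(M₀†, E₀†, m†, a†, b†)` produce the same measured output
`M_λ(t) = M_λ†(t)` for all `t ≥ 0`, then the two parameter tuples coincide. -/
theorem operon_parameters_identifiable
    (M₀ E₀ m a b M₀' E₀' m' a' b' : ℝ)
    (hM₀ : 0 < M₀) (hE₀ : 0 < E₀) (hm : 0 < m) (ha : 0 < a) (hb : 0 < b)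
    (hM₀' : 0 < M₀') (hE₀' : 0 < E₀') (hm' : 0 < m') (ha' : 0 < a') (hb' : 0 < b')
    (M E M' E' : ℝ → ℝ → ℝ)
    (hEpos : ∀ lam : ℝ, 0 ≤ lam → ∀ t : ℝ, 0 ≤ t → 0 < E lam t)
    (hEpos' : ∀ lam : ℝ, 0 ≤ lam → ∀ t : ℝ, 0 ≤ t → 0 < E' lam t)
    (hMinit : ∀ lam : ℝ, 0 ≤ lam → M lam 0 = M₀)
    (hEinit : ∀ lam : ℝ, 0 ≤ lam → E lam 0 = E₀)
    (hMinit' : ∀ lam : ℝ, 0 ≤ lam → M' lam 0 = M₀')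
    (hEinit' : ∀ lam : ℝ, 0 ≤ lam → E' lam 0 = E₀')
    (hModE : ∀ lam : ℝ, 0 ≤ lam → ∀ t : ℝ, 0 ≤ t →
      HasDerivWithinAt (M lam)
        (E lam t ^ m / (1 + E lam t ^ m) - a * M lam t) (Set.Ici 0) t)
    (hEode : ∀ lam : ℝ, 0 ≤ lam → ∀ t : ℝ, 0 ≤ t →
      HasDerivWithinAt (E lam)
        (M lam t - b * E lam t - lam * E lam t) (Set.Ici 0) t)
    (hModE' : ∀ lam : ℝ, 0 ≤ lam → ∀ t : ℝ, 0 ≤ t →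
      HasDerivWithinAt (M' lam)
        (E' lam t ^ m' / (1 + E' lam t ^ m') - a' * M' lam t) (Set.Ici 0) t)
    (hEode' : ∀ lam : ℝ, 0 ≤ lam → ∀ t : ℝ, 0 ≤ t →
      HasDerivWithinAt (E' lam)
        (M' lam t - b' * E' lam t - lam * E' lam t) (Set.Ici 0) t)
    (hout : ∀ lam : ℝ, 0 ≤ lam → ∀ t : ℝ, 0 ≤ t → M lam t = M' lam t) :
    M₀ = M₀' ∧ E₀ = E₀' ∧ m = m' ∧ a = a' ∧ b = b' :=
  operon_parameters_identifiable_general M₀ E₀ m a b M₀' E₀' m' a' b' hM₀ hm hm' M E M' E' hEpos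
    hEpos' hMinit hEinit hMinit' hEinit' hModE hEode hModE' hEode' hout
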